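/- For the pentagon P above, the displacement vector 𝔇 between the boundary lattice barycenter and the area centroid equals (1/(6|P||∂P|))·(−α+2β+3αβ+3α²β, −β+2α+3αβ+3αβ²), where |P| = 1/2+α+β+αβ and |∂P| = 3+2α+2β. -/

import Mathlib

open MeasureTheory

/-- The lattice length of the segment from `v` to `w`: the value `|u|` where
`w - v = u • (p, q)` for a primitive (coprime) integer vector `(p, q)`. -/
noncomputable def latticeLength (v w : ℝ × ℝ) : ℝ :=
  sInf {r : ℝ | ∃ (u : ℝ) (p q : ℤ), IsCoprime p q ∧
    w - v = u • ((p : ℝ), (q : ℝ)) ∧ r = |u|}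

/-- Integral of `f` over the segment from `v` to `w` with respect to the lattice
length measure dλ (equal to `latticeLength v w` times normalized length measure). -/
noncomputable def edgeInt (v w : ℝ × ℝ) (f : ℝ × ℝ → ℝ) : ℝ :=
  latticeLength v w * ∫ t in (0:ℝ)..(1:ℝ), f (v + t • (w - v))

/-- The pentagon with vertices (1,0), (α+1,0), (α+1,β+1), (0,β+1), (0,1). -/
noncomputable def pent (α β : ℝ) : Set (ℝ × ℝ) :=
  convexHull ℝ ({(1, 0), (α + 1, 0), (α + 1, β + 1), (0, β + 1), (0, 1)} : Set (ℝ × ℝ))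

noncomputable def pentArea (α β : ℝ) : ℝ := (volume (pent α β)).toReal

noncomputable def pentPerim (α β : ℝ) : ℝ :=
  latticeLength (1, 0) (α + 1, 0) + latticeLength (α + 1, 0) (α + 1, β + 1) +
    latticeLength (α + 1, β + 1) (0, β + 1) + latticeLength (0, β + 1) (0, 1) +
    latticeLength (0, 1) (1, 0)

noncomputable def pentCentroid (α β : ℝ) : ℝ × ℝ :=
  ((∫ p in pent α β, p.1) / pentArea α β, (∫ p in pent α β, p.2) / pentArea α β)

noncomputable def pentBdryInt (α β : ℝ) (f : ℝ × ℝ → ℝ) : ℝ :=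
  edgeInt (1, 0) (α + 1, 0) f + edgeInt (α + 1, 0) (α + 1, β + 1) f +
    edgeInt (α + 1, β + 1) (0, β + 1) f + edgeInt (0, β + 1) (0, 1) f +
    edgeInt (0, 1) (1, 0) f

noncomputable def pentBdryBary (α β : ℝ) : ℝ × ℝ :=
  (pentBdryInt α β (fun p => p.1) / pentPerim α β,
   pentBdryInt α β (fun p => p.2) / pentPerim α β)

/-- The vector 𝔇 joining the interior barycenter to the boundary barycenter. -/
noncomputable def pentD (α β : ℝ) : ℝ × ℝ := pentBdryBary α β - pentCentroid α β

/-- The moment-of-inertia matrix Π of the pentagon about its barycenter. -/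
noncomputable def pentPi (α β : ℝ) : Matrix (Fin 2) (Fin 2) ℝ :=
  !![∫ p in pent α β, (p.1 - (pentCentroid α β).1) * (p.1 - (pentCentroid α β).1),
     ∫ p in pent α β, (p.1 - (pentCentroid α β).1) * (p.2 - (pentCentroid α β).2);
     ∫ p in pent α β, (p.2 - (pentCentroid α β).2) * (p.1 - (pentCentroid α β).1),
     ∫ p in pent α β, (p.2 - (pentCentroid α β).2) * (p.2 - (pentCentroid α β).2)]

/-! The pentagon is the rectangle `[0, α + 1] × [0, β + 1]` with the corner `x + y < 1` cut off,
so its vertical slices are `[max 0 (1 - x), β + 1]`; Fubini, split at `x = 1`, gives the area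
`(α + 1)(β + 1) - 1/2` and the first moments `(β + 1)(α + 1)²/2 - 1/6`, `(α + 1)(β + 1)²/2 - 1/6`.
The edges are `α (1, 0)`, `(β + 1) (0, 1)`, `(α + 1) (-1, 0)`, `β (0, -1)` and `(1, -1)`, each a
nonnegative multiple of a primitive vector, and the lattice length is that multiple (by Bézout, the
multiple does not depend on the primitive vector). So the boundary moments are the edge midpoints
weighted by these lengths, and the formula for `𝔇` is a rational identity. -/

open Set

theorem exists_int_eq_mul_of_smul_eq {p q p' q' : ℤ} (hpq : IsCoprime p q) {u c : ℝ}
    (h : u • ((p : ℝ), (q : ℝ)) = c • ((p' : ℝ), (q' : ℝ))) : ∃ n : ℤ, u = c * n := by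
  obtain ⟨a, b, hab⟩ := hpq
  have hab' : (a : ℝ) * p + b * q = 1 := by exact_mod_cast hab
  simp only [Prod.smul_mk, smul_eq_mul, Prod.mk.injEq] at h
  exact ⟨a * p' + b * q', by push_cast; linear_combination (-u) * hab' + a * h.1 + b * h.2⟩

theorem latticeLength_eq_abs {v w : ℝ × ℝ} {c : ℝ} {p q : ℤ} (hpq : IsCoprime p q)
    (h : w - v = c • ((p : ℝ), (q : ℝ))) : latticeLength v w = |c| := by
  suffices hset : {r : ℝ | ∃ (u : ℝ) (p q : ℤ), IsCoprime p q ∧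
      w - v = u • ((p : ℝ), (q : ℝ)) ∧ r = |u|} = {|c|} by
    rw [latticeLength, hset, csInf_singleton]
  ext r
  constructor
  · rintro ⟨u, p', q', hpq', hu, rfl⟩
    obtain ⟨n, hn⟩ := exists_int_eq_mul_of_smul_eq hpq' (hu.symm.trans h)
    obtain ⟨m, hm⟩ := exists_int_eq_mul_of_smul_eq hpq (h.symm.trans hu)
    rcases eq_or_ne c 0 with rfl | hc
    · simp [hn]
    have hnm : n * m = 1 := by
      have : c * (n * m) = c * 1 := by linear_combination (-(m : ℝ)) * hn - hm
      exact_mod_cast mul_left_cancel₀ hc this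
    rcases Int.eq_one_or_neg_one_of_mul_eq_one hnm with rfl | rfl <;> simp [hn]
  · rintro rfl
    exact ⟨c, p, q, hpq, h, rfl⟩

theorem integral_eq_of_eq_quadratic {f : ℝ → ℝ} (a b c₀ c₁ c₂ : ℝ)
    (hf : ∀ x, f x = c₀ + c₁ * x + c₂ * x ^ 2) :
    ∫ x in a..b, f x = c₀ * (b - a) + c₁ * (b ^ 2 - a ^ 2) / 2 + c₂ * (b ^ 3 - a ^ 3) / 3 := by
  have hderiv : ∀ x ∈ uIcc a b,
      HasDerivAt (fun y => c₀ * y + c₁ / 2 * y ^ 2 + c₂ / 3 * y ^ 3) (f x) x := fun x _ => by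
    rw [hf]
    refine ((((hasDerivAt_id' x).const_mul c₀).add ((hasDerivAt_pow 2 x).const_mul (c₁ / 2))).add
      ((hasDerivAt_pow 3 x).const_mul (c₂ / 3))).congr_deriv ?_
    push_cast
    ring
  have hint : IntervalIntegrable f volume a b := by
    rw [funext hf]; exact Continuous.intervalIntegrable (by fun_prop) a b
  rw [intervalIntegral.integral_eq_sub_of_hasDerivAt hderiv hint]
  ring

theorem edgeInt_fst (v w : ℝ × ℝ) :
    edgeInt v w (fun p => p.1) = latticeLength v w * ((v.1 + w.1) / 2) := by
  rw [edgeInt, integral_eq_of_eq_quadratic 0 1 v.1 (w.1 - v.1) 0]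
  · ring
  · intro t; simp only [Prod.fst_add, Prod.smul_fst, Prod.fst_sub, smul_eq_mul]; ring

theorem edgeInt_snd (v w : ℝ × ℝ) :
    edgeInt v w (fun p => p.2) = latticeLength v w * ((v.2 + w.2) / 2) := by
  rw [edgeInt, integral_eq_of_eq_quadratic 0 1 v.2 (w.2 - v.2) 0]
  · ring
  · intro t; simp only [Prod.snd_add, Prod.smul_snd, Prod.snd_sub, smul_eq_mul]; ring

theorem setIntegral_slices_eq {a b : ℝ} (hab : a ≤ b) {g h : ℝ → ℝ} (hg : Measurable g)
    (hh : Measurable h) (hgh : ∀ x ∈ Icc a b, g x ≤ h x) {f : ℝ × ℝ → ℝ}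
    (hf : IntegrableOn f {p | p.1 ∈ Icc a b ∧ p.2 ∈ Icc (g p.1) (h p.1)}) :
    ∫ p in {p | p.1 ∈ Icc a b ∧ p.2 ∈ Icc (g p.1) (h p.1)}, f p =
      ∫ x in a..b, ∫ y in g x..h x, f (x, y) := by
  set S : Set (ℝ × ℝ) := {p | p.1 ∈ Icc a b ∧ p.2 ∈ Icc (g p.1) (h p.1)}
  have hS : MeasurableSet S :=
    (measurable_fst measurableSet_Icc).inter
      ((measurableSet_le (hg.comp measurable_fst) measurable_snd).inter
        (measurableSet_le measurable_snd (hh.comp measurable_fst)))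
  have hslice : ∀ x, ∫ y, S.indicator f (x, y) =
      (Icc a b).indicator (fun x => ∫ y in g x..h x, f (x, y)) x := by
    intro x
    by_cases hx : x ∈ Icc a b
    · have : (fun y => S.indicator f (x, y)) = (Icc (g x) (h x)).indicator (fun y => f (x, y)) := by
        ext y; simp [S, indicator_apply, hx.1, hx.2]
      rw [indicator_of_mem hx, this, integral_indicator measurableSet_Icc,
        integral_Icc_eq_integral_Ioc, ← intervalIntegral.integral_of_le (hgh x hx)]
    · have hxS : ∀ y, (x, y) ∉ S := fun y hy => hx hy.1
      simp [indicator_of_notMem (hxS _), hx]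
  rw [← integral_indicator hS, Measure.volume_eq_prod,
    integral_prod _ ((integrable_indicator_iff hS).mpr hf)]
  simp only [hslice]
  rw [integral_indicator measurableSet_Icc, integral_Icc_eq_integral_Ioc,
    ← intervalIntegral.integral_of_le hab]

theorem continuous_intervalIntegral_slices {f : ℝ × ℝ → ℝ} (hf : Continuous f) {g h : ℝ → ℝ}
    (hg : Continuous g) (hh : Continuous h) :
    Continuous fun x => ∫ y in g x..h x, f (x, y) := by
  have hsub : ∀ x, ∫ y in g x..h x, f (x, y) =
      (∫ y in (0 : ℝ)..h x, f (x, y)) - ∫ y in (0 : ℝ)..g x, f (x, y) := fun x =>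
    (intervalIntegral.integral_interval_sub_left (Continuous.intervalIntegrable (by fun_prop) _ _)
      (Continuous.intervalIntegrable (by fun_prop) _ _)).symm
  simp only [hsub]
  fun_prop

theorem mk_mem_segment_left {x₁ x₂ x : ℝ} (y : ℝ) (hx : x ∈ uIcc x₁ x₂) :
    (x, y) ∈ segment ℝ (x₁, y) (x₂, y) := by
  rw [← Prod.image_mk_segment_left, segment_eq_uIcc]
  exact mem_image_of_mem _ hx

theorem mk_mem_segment_right (x : ℝ) {y₁ y₂ y : ℝ} (hy : y ∈ uIcc y₁ y₂) :
    (x, y) ∈ segment ℝ (x, y₁) (x, y₂) := by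
  rw [← Prod.image_mk_segment_right, segment_eq_uIcc]
  exact mem_image_of_mem _ hy

section Pentagon

variable {α β : ℝ}

theorem pent_eq_slices (hα : 0 ≤ α) (hβ : 0 ≤ β) :
    pent α β = {p : ℝ × ℝ | p.1 ∈ Icc 0 (α + 1) ∧ p.2 ∈ Icc (max 0 (1 - p.1)) (β + 1)} := by
  refine Subset.antisymm (convexHull_min ?_ ?_) ?_
  · intro p hp
    simp only [mem_insert_iff, mem_singleton_iff] at hp
    rcases hp with rfl | rfl | rfl | rfl | rfl <;>
      refine ⟨⟨?_, ?_⟩, max_le ?_ ?_, ?_⟩ <;> norm_num <;> linarith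
  · rintro ⟨x₁, y₁⟩ ⟨⟨hx₁, hx₁'⟩, hy₁, hy₁'⟩ ⟨x₂, y₂⟩ ⟨⟨hx₂, hx₂'⟩, hy₂, hy₂'⟩ a b ha hb hab
    simp only [max_le_iff] at hy₁ hy₂
    simp only [Prod.smul_mk, Prod.mk_add_mk, smul_eq_mul]
    refine ⟨⟨?_, ?_⟩, max_le ?_ ?_, ?_⟩ <;> nlinarith
  · rintro ⟨x, y⟩ ⟨⟨hx₀, hx₁⟩, hy₀, hy₁⟩
    have htop : (x, β + 1) ∈ pent α β :=
      segment_subset_convexHull (by simp) (by simp) (mk_mem_segment_left (β + 1) (x₁ := 0)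
        (x₂ := α + 1) (mem_uIcc_of_le hx₀ hx₁))
    have hbot : (x, max 0 (1 - x)) ∈ pent α β := by
      rcases le_total x 1 with h | h
      · rw [max_eq_right (by linarith)]
        refine segment_subset_convexHull (x := (0, 1)) (y := (1, 0)) (by simp) (by simp)
          ⟨1 - x, x, by linarith, hx₀, by ring, ?_⟩
        ext <;> simp
      · rw [max_eq_left (by linarith)]
        exact segment_subset_convexHull (by simp) (by simp)
          (mk_mem_segment_left 0 (x₁ := 1) (x₂ := α + 1) (mem_uIcc_of_le h hx₁))
    exact (convex_convexHull ℝ _).segment_subset hbot htop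
      (mk_mem_segment_right x (mem_uIcc_of_le hy₀ hy₁))

theorem isCompact_pent (α β : ℝ) : IsCompact (pent α β) :=
  (toFinite _).isCompact_convexHull ℝ

theorem setIntegral_pent {f : ℝ × ℝ → ℝ} (hf : Continuous f) (hα : 0 ≤ α) (hβ : 0 ≤ β) :
    ∫ p in pent α β, f p =
      (∫ x in (0 : ℝ)..1, ∫ y in (1 - x)..(β + 1), f (x, y)) +
        ∫ x in (1 : ℝ)..(α + 1), ∫ y in (0 : ℝ)..(β + 1), f (x, y) := by
  have hint : IntegrableOn f (pent α β) := hf.continuousOn.integrableOn_compact (isCompact_pent α β)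
  have hcont := continuous_intervalIntegral_slices hf
    (by fun_prop : Continuous fun x : ℝ => max 0 (1 - x)) (continuous_const (y := β + 1))
  rw [pent_eq_slices hα hβ] at hint ⊢
  rw [setIntegral_slices_eq (by linarith) (by fun_prop) measurable_const
      (fun x hx => max_le (by linarith) (by linarith [hx.1])) hint,
    ← intervalIntegral.integral_add_adjacent_intervals (hcont.intervalIntegrable 0 1)
      (hcont.intervalIntegrable 1 (α + 1))]
  congr 1 <;> refine intervalIntegral.integral_congr fun x hx => ?_
  · rw [uIcc_of_le zero_le_one] at hx
    simp only [max_eq_right (by linarith [hx.2] : 0 ≤ 1 - x)]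
  · rw [uIcc_of_le (by linarith)] at hx
    simp only [max_eq_left (by linarith [hx.1] : 1 - x ≤ 0)]

theorem pentArea_eq (hα : 0 ≤ α) (hβ : 0 ≤ β) : pentArea α β = 1 / 2 + α + β + α * β := by
  have h := setIntegral_pent (f := fun _ => (1 : ℝ)) continuous_const hα hβ
  simp only [setIntegral_const, smul_eq_mul, mul_one, intervalIntegral.integral_const] at h
  rw [pentArea, ← measureReal_def, h, integral_eq_of_eq_quadratic 0 1 β 1 0]
  · ring
  · intro x; ring

theorem setIntegral_pent_fst (hα : 0 ≤ α) (hβ : 0 ≤ β) :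
    ∫ p in pent α β, p.1 = (β + 1) * (α + 1) ^ 2 / 2 - 1 / 6 := by
  rw [setIntegral_pent continuous_fst hα hβ]
  simp only [intervalIntegral.integral_const, smul_eq_mul]
  rw [integral_eq_of_eq_quadratic 0 1 0 β 1, integral_eq_of_eq_quadratic 1 (α + 1) 0 (β + 1) 0]
  · ring
  all_goals intro x; ring

theorem setIntegral_pent_snd (hα : 0 ≤ α) (hβ : 0 ≤ β) :
    ∫ p in pent α β, p.2 = (α + 1) * (β + 1) ^ 2 / 2 - 1 / 6 := by
  rw [setIntegral_pent continuous_snd hα hβ]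
  simp only [integral_id, intervalIntegral.integral_const, smul_eq_mul]
  rw [integral_eq_of_eq_quadratic 0 1 (((β + 1) ^ 2 - 1) / 2) 1 (-1 / 2)]
  · ring
  · intro x; ring

theorem latticeLength_pent_bottom (hα : 0 ≤ α) : latticeLength (1, 0) (α + 1, 0) = α := by
  rw [latticeLength_eq_abs (c := α) isCoprime_one_left (q := 0) (by ext <;> simp),
    abs_of_nonneg hα]

theorem latticeLength_pent_right (hβ : 0 ≤ β) :
    latticeLength (α + 1, 0) (α + 1, β + 1) = β + 1 := by
  rw [latticeLength_eq_abs (c := β + 1) isCoprime_one_right (p := 0) (by ext <;> simp),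
    abs_of_nonneg (by linarith)]

theorem latticeLength_pent_top (hα : 0 ≤ α) :
    latticeLength (α + 1, β + 1) (0, β + 1) = α + 1 := by
  rw [latticeLength_eq_abs (c := α + 1) isCoprime_one_left.neg_left (q := 0) (by ext <;> simp),
    abs_of_nonneg (by linarith)]

theorem latticeLength_pent_left (hβ : 0 ≤ β) : latticeLength (0, β + 1) (0, 1) = β := by
  rw [latticeLength_eq_abs (c := β) isCoprime_one_right.neg_right (p := 0) (by ext <;> simp),
    abs_of_nonneg hβ]

theorem latticeLength_pent_cut : latticeLength (0, 1) (1, 0) = 1 := by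
  rw [latticeLength_eq_abs (c := 1) isCoprime_one_left (q := -1) (by ext <;> simp), abs_one]

theorem pentPerim_eq (hα : 0 ≤ α) (hβ : 0 ≤ β) : pentPerim α β = 3 + 2 * α + 2 * β := by
  rw [pentPerim, latticeLength_pent_bottom hα, latticeLength_pent_right hβ,
    latticeLength_pent_top hα, latticeLength_pent_left hβ, latticeLength_pent_cut]
  ring

theorem pentBdryInt_fst (hα : 0 ≤ α) (hβ : 0 ≤ β) :
    pentBdryInt α β (fun p => p.1) = (α + 1) * (α + β + 2) := by
  simp only [pentBdryInt, edgeInt_fst, latticeLength_pent_bottom hα, latticeLength_pent_right hβ,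
    latticeLength_pent_top hα, latticeLength_pent_left hβ, latticeLength_pent_cut]
  ring

theorem pentBdryInt_snd (hα : 0 ≤ α) (hβ : 0 ≤ β) :
    pentBdryInt α β (fun p => p.2) = (β + 1) * (α + β + 2) := by
  simp only [pentBdryInt, edgeInt_snd, latticeLength_pent_bottom hα, latticeLength_pent_right hβ,
    latticeLength_pent_top hα, latticeLength_pent_left hβ, latticeLength_pent_cut]
  ring

end Pentagon

theorem pent_D (α β : ℝ) (hα : 0 < α) (hβ : 0 < β) :
    pentD α β =
      (1 / (6 * (1 / 2 + α + β + α * β) * (3 + 2 * α + 2 * β))) •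
        ((-α + 2 * β + 3 * α * β + 3 * α ^ 2 * β,
          -β + 2 * α + 3 * α * β + 3 * α * β ^ 2) : ℝ × ℝ) := by
  have hA : 1 / 2 + α + β + α * β ≠ 0 := by nlinarith
  have hP : 3 + 2 * α + 2 * β ≠ 0 := by linarith
  rw [pentD, pentBdryBary, pentCentroid, pentArea_eq hα.le hβ.le, pentPerim_eq hα.le hβ.le,
    setIntegral_pent_fst hα.le hβ.le, setIntegral_pent_snd hα.le hβ.le,
    pentBdryInt_fst hα.le hβ.le, pentBdryInt_snd hα.le hβ.le]
  ext <;> simp only [Prod.fst_sub, Prod.snd_sub, Prod.smul_fst, Prod.smul_snd, smul_eq_mul] <;>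
    field_simp <;> ring
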